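/- arXiv:2408.05865 — 3 statements merged into one kernel-verified Lean document; each statement's English description precedes it below -/
import Mathlib

section
/- Let G be a connected split graph whose vertex set is partitioned into a clique C with |C| = k ≥ 3 and a nonempty independent set I such that every vertex of I is non-adjacent to at least one vertex of C. Then G admits a strong conflict-free vertex-connection k-coloring, and svcfc(G) = k. -/
open SimpleGraph

/-- `f` is a strong conflict-free vertex-connection coloring of `G`: any two distinct
vertices are joined by a shortest path on which some color occurs exactly once. -/
def IsSCFVC {V α : Type*} [DecidableEq α] (G : SimpleGraph V) (f : V → α) : Prop :=
  ∀ u v : V, u ≠ v → ∃ p : G.Walk u v, p.length = G.dist u v ∧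
    ∃ c : α, (p.support.map f).count c = 1

/-- The strong conflict-free vertex-connection number. -/
noncomputable def svcfc {V : Type*} (G : SimpleGraph V) : ℕ :=
  sInf {k | ∃ f : V → Fin k, IsSCFVC G f}

/-!
Since `C` is a clique and its complement is independent, any two vertices are at distance at
most `3`. Colour each clique vertex by itself and each independent vertex `v` by a clique vertex
`r v` not adjacent to `v`; this is a proper colouring, so on every shortest path of length at
most `2` the middle vertex (or an endpoint) has a unique colour. A pair `u, v` at distance `3`
lies in the independent set and is joined by paths `u a b v` with `a, b ∈ C`; such a path has
`a` or `b` as uniquely coloured vertex unless `N(u) = {r v}` and `N(v) = {r u}`. This mutual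
pendant situation is excluded by colouring a pendant vertex with unique neighbour `a` by `ρ a`,
where `ρ` is a map of `C` with no fixed points and no `2`-cycles, which exists as `|C| ≥ 3`.
The lower bound holds because adjacent vertices, in particular the vertices of `C`, receive
distinct colours.
-/

section

variable {V : Type*} {G : SimpleGraph V}

lemma SimpleGraph.Walk.exists_count_eq_one_of_length_le_two {α : Type*} [DecidableEq α]
    {f : V → α} (hf : ∀ ⦃x y⦄, G.Adj x y → f x ≠ f y) {u v : V} (p : G.Walk u v)
    (hp : p.length ≤ 2) :
    ∃ c, (p.support.map f).count c = 1 := by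
  match p with
  | .nil => exact ⟨f u, by simp⟩
  | .cons h .nil => exact ⟨f u, by simp [(hf h).symm]⟩
  | .cons (v := w) h (.cons h' .nil) =>
    exact ⟨f w, by simp [hf h, (hf h').symm]⟩
  | .cons _ (.cons _ (.cons _ _)) => simp at hp

lemma SimpleGraph.Connected.exists_adj [Nontrivial V] (hG : G.Connected) (v : V) :
    ∃ w, G.Adj v w :=
  G.mem_support.mp (hG.preconnected.support_eq_univ ▸ Set.mem_univ v)

lemma SimpleGraph.exists_adj_ne_of_neighborSet_ne_singleton {u a x : V} (ha : G.Adj u a)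
    (hx : G.neighborSet u ≠ {x}) : ∃ b, G.Adj u b ∧ b ≠ x := by
  by_contra! h
  apply hx
  ext b
  exact ⟨h b, by rintro rfl; exact h a ha ▸ ha⟩

lemma SimpleGraph.exists_adj_adj_and_ne_or_ne {u v x y a₀ b₀ : V} (ha₀ : G.Adj u a₀)
    (hb₀ : G.Adj v b₀) (h : G.neighborSet u = {x} → G.neighborSet v ≠ {y}) :
    ∃ a b, G.Adj u a ∧ G.Adj v b ∧ (a ≠ x ∨ b ≠ y) := by
  by_cases hNu : G.neighborSet u = {x}
  · obtain ⟨b, hvb, hb⟩ := exists_adj_ne_of_neighborSet_ne_singleton hb₀ (h hNu)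
    exact ⟨x, b, (mem_neighborSet _ _ _).mp (hNu ▸ rfl), hvb, .inr hb⟩
  · obtain ⟨a, hua, ha⟩ := exists_adj_ne_of_neighborSet_ne_singleton ha₀ hNu
    exact ⟨a, b₀, hua, hb₀, .inl ha⟩

lemma IsSCFVC.of_comp {α β : Type*} [DecidableEq α] [DecidableEq β] {f : V → α} {ψ : α → β}
    (hψ : ψ.Injective) (h : IsSCFVC G (ψ ∘ f)) : IsSCFVC G f := by
  intro u v huv
  obtain ⟨p, hp, c, hc⟩ := h u v huv
  rw [← List.map_map] at hc
  obtain ⟨a, -, rfl⟩ := List.mem_map.mp (List.count_pos_iff.mp (hc ▸ Nat.one_pos))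
  exact ⟨p, hp, a, by rwa [List.count_map_of_injective _ _ hψ] at hc⟩

lemma IsSCFVC.ne_of_adj {α : Type*} [DecidableEq α] {f : V → α} (hf : IsSCFVC G f) {u v : V}
    (huv : G.Adj u v) : f u ≠ f v := by
  obtain ⟨p, hp, c, hc⟩ := hf u v huv.ne
  rw [dist_eq_one_iff_adj.mpr huv] at hp
  cases p with
  | nil => simp at hp
  | cons _ q =>
    cases q with
    | nil =>
      intro hfuv
      rcases eq_or_ne (f u) c with rfl | _ <;> simp_all [List.count_cons]
    | cons _ _ => simp at hp

lemma svcfc_eq_card_of_isClique {C : Finset V} (hC : G.IsClique (C : Set V))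
    (hf : ∃ f : V → Fin C.card, IsSCFVC G f) : svcfc G = C.card := by
  refine le_antisymm (Nat.sInf_le hf) (le_csInf ⟨_, hf⟩ ?_)
  rintro j ⟨f, hf⟩
  have hinj : Set.InjOn f C := fun a ha b hb hfab => by
    by_contra hab
    exact hf.ne_of_adj (hC ha hb hab) hfab
  simpa using Finset.card_le_card_of_injOn f (fun a _ => Finset.mem_coe.mpr (Finset.mem_univ _))
    hinj

lemma exists_fin_card_isSCFVC [DecidableEq V] {C : Finset V} {r : V → V} (hr : ∀ v, r v ∈ C)
    (hrC : IsSCFVC G r) : ∃ f : V → Fin C.card, IsSCFVC G f := by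
  refine ⟨fun v => C.equivFin ⟨r v, hr v⟩, IsSCFVC.of_comp (ψ := Subtype.val ∘ C.equivFin.symm)
    (Subtype.val_injective.comp C.equivFin.symm.injective) ?_⟩
  convert hrC
  funext v
  simp

lemma Set.exists_mapsTo_ne_and_comp_ne {α : Type*} {s : Set α} {a b c : α} (ha : a ∈ s)
    (hb : b ∈ s) (hc : c ∈ s) (hab : a ≠ b) (hac : a ≠ c) (hbc : b ≠ c) :
    ∃ ρ : α → α, ∀ x ∈ s, ρ x ∈ s ∧ ρ x ≠ x ∧ ρ (ρ x) ≠ x := by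
  classical
  refine ⟨fun x => if x = a then b else if x = b then c else a, fun x hx => ?_⟩
  by_cases hxa : x = a <;> by_cases hxb : x = b <;> simp_all [eq_comm]

section Split

variable {C : Set V}

lemma mem_of_adj_of_notMem (hI : G.IsIndepSet Cᶜ) {v w : V} (hv : v ∉ C) (hvw : G.Adj v w) :
    w ∈ C := by
  by_contra hw
  exact hI hv hw hvw.ne hvw

lemma dist_le_two_of_mem (hG : G.Connected) (hC : G.IsClique C) (hI : G.IsIndepSet Cᶜ) {u : V}
    (hu : u ∈ C) (v : V) : G.dist u v ≤ 2 := by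
  rcases eq_or_ne u v with rfl | huv
  · simp
  by_cases hadj : G.Adj u v
  · simp [dist_eq_one_iff_adj.mpr hadj]
  have hv : v ∉ C := fun hv => hadj (hC hu hv huv)
  have := nontrivial_of_ne u v huv
  obtain ⟨w, hvw⟩ := hG.exists_adj v
  have huw : G.Adj u w :=
    hC hu (mem_of_adj_of_notMem hI hv hvw) (by rintro rfl; exact hadj hvw.symm)
  simpa using dist_le (.cons huw (.cons hvw.symm .nil))

variable {r : V → V}

lemma ne_of_adj_of_retraction (hI : G.IsIndepSet Cᶜ) (hr_fix : ∀ v ∈ C, r v = v)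
    (hr_nonadj : ∀ v, ¬ G.Adj v (r v)) ⦃x y : V⦄ (hxy : G.Adj x y) : r x ≠ r y := by
  wlog hx : x ∈ C generalizing x y
  · exact (this hxy.symm (mem_of_adj_of_notMem hI hx hxy)).symm
  rw [hr_fix x hx]
  rintro h
  exact hr_nonadj y (h ▸ hxy.symm)

theorem isSCFVC_of_retraction [DecidableEq V] (hG : G.Connected) (hC : G.IsClique C)
    (hI : G.IsIndepSet Cᶜ) (hr_fix : ∀ v ∈ C, r v = v) (hr_nonadj : ∀ v, ¬ G.Adj v (r v))
    (hr_pendant : ∀ u v, u ∉ C → v ∉ C → G.neighborSet u = {r v} → G.neighborSet v ≠ {r u}) :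
    IsSCFVC G r := by
  have hproper := ne_of_adj_of_retraction hI hr_fix hr_nonadj
  intro u v huv
  by_cases hd : G.dist u v ≤ 2
  · obtain ⟨p, hp⟩ := (hG.preconnected u v).exists_walk_length_eq_dist
    exact ⟨p, hp, p.exists_count_eq_one_of_length_le_two hproper (hp ▸ hd)⟩
  have hu : u ∉ C := fun hu => hd (dist_le_two_of_mem hG hC hI hu v)
  have hv : v ∉ C := fun hv => hd (SimpleGraph.dist_comm ▸ dist_le_two_of_mem hG hC hI hv u)
  have := nontrivial_of_ne u v huv
  obtain ⟨a₀, ha₀⟩ := hG.exists_adj u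
  obtain ⟨b₀, hb₀⟩ := hG.exists_adj v
  obtain ⟨a, b, hua, hvb, hne_or_ne⟩ := exists_adj_adj_and_ne_or_ne ha₀ hb₀ (hr_pendant u v hu hv)
  have ha := mem_of_adj_of_notMem hI hu hua
  have hb := mem_of_adj_of_notMem hI hv hvb
  have hab : a ≠ b := by
    rintro rfl
    exact hd (by simpa using dist_le (.cons hua (.cons hvb.symm .nil)))
  let p : G.Walk u v := .cons hua (.cons (hC ha hb hab) (.cons hvb.symm .nil))
  have hp : p.length = G.dist u v := by
    have := dist_le p
    simp only [p, Walk.length_cons, Walk.length_nil] at this ⊢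
    omega
  refine ⟨p, hp, ?_⟩
  have hrab := hproper (hC ha hb hab)
  rcases hne_or_ne with h | h
  · have hrav : r a ≠ r v := by rwa [hr_fix a ha]
    exact ⟨r a, by simp [p, hproper hua, hrab.symm, hrav.symm]⟩
  · have hrbu : r b ≠ r u := by rwa [hr_fix b hb]
    exact ⟨r b, by simp [p, hproper hvb, hrab, hrbu.symm]⟩

lemma exists_nonadj_retraction (hI : G.IsIndepSet Cᶜ) (hmiss : ∀ v ∉ C, ∃ c ∈ C, ¬ G.Adj v c)
    {ρ : V → V} (hρ : ∀ a ∈ C, ρ a ∈ C ∧ ρ a ≠ a ∧ ρ (ρ a) ≠ a) :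
    ∃ r : V → V, (∀ v, r v ∈ C) ∧ (∀ v ∈ C, r v = v) ∧ (∀ v, ¬ G.Adj v (r v)) ∧
      ∀ u v, u ∉ C → v ∉ C → G.neighborSet u = {r v} → G.neighborSet v ≠ {r u} := by
  have hchoice : ∀ v, ∃ c ∈ C, ¬ G.Adj v c ∧ (v ∈ C → c = v) ∧
      (v ∉ C → ∀ a, G.neighborSet v = {a} → c = ρ a) := by
    intro v
    by_cases hv : v ∈ C
    · exact ⟨v, hv, G.irrefl, fun _ => rfl, absurd hv⟩
    by_cases hpendant : ∃ a, G.neighborSet v = {a}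
    · obtain ⟨a, hva⟩ := hpendant
      have hadj : ∀ w, G.Adj v w ↔ w = a := fun w => Set.ext_iff.mp hva w
      have ha := mem_of_adj_of_notMem hI hv ((hadj a).mpr rfl)
      refine ⟨ρ a, (hρ a ha).1, fun h => (hρ a ha).2.1 ((hadj _).mp h), (absurd · hv),
        fun _ a' hva' => ?_⟩
      rw [Set.singleton_eq_singleton_iff.mp (hva.symm.trans hva')]
    · obtain ⟨c, hc, hvc⟩ := hmiss v hv
      exact ⟨c, hc, hvc, (absurd · hv), fun _ a hva => (hpendant ⟨a, hva⟩).elim⟩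
  choose r hr_mem hr_nonadj hr_fix hr_pendant using hchoice
  refine ⟨r, hr_mem, hr_fix, hr_nonadj, fun u v hu hv hNu hNv => ?_⟩
  have hrv := hr_pendant v hv _ hNv
  rw [hr_pendant u hu _ hNu] at hrv
  exact (hρ _ (hr_mem v)).2.2 hrv.symm

theorem exists_isSCFVC_of_isClique_isIndepSet_compl [DecidableEq V] (hG : G.Connected)
    (hC : G.IsClique C) (hI : G.IsIndepSet Cᶜ) (hmiss : ∀ v ∉ C, ∃ c ∈ C, ¬ G.Adj v c)
    {a b c : V} (ha : a ∈ C) (hb : b ∈ C) (hc : c ∈ C) (hab : a ≠ b) (hac : a ≠ c)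
    (hbc : b ≠ c) : ∃ r : V → V, (∀ v, r v ∈ C) ∧ IsSCFVC G r := by
  obtain ⟨ρ, hρ⟩ := Set.exists_mapsTo_ne_and_comp_ne ha hb hc hab hac hbc
  obtain ⟨r, hr_mem, hr_fix, hr_nonadj, hr_pendant⟩ := exists_nonadj_retraction hI hmiss hρ
  exact ⟨r, hr_mem, isSCFVC_of_retraction hG hC hI hr_fix hr_nonadj hr_pendant⟩

end Split

end

theorem stmt15_general {V : Type*} [Fintype V] [DecidableEq V] (G : SimpleGraph V)
    (hG : G.Connected) (C I : Finset V)
    (huniv : C ∪ I = Finset.univ)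
    (hclique : ∀ u ∈ C, ∀ v ∈ C, u ≠ v → G.Adj u v)
    (hindep : ∀ u ∈ I, ∀ v ∈ I, ¬ G.Adj u v)
    (hmiss : ∀ u ∈ I, ∃ v ∈ C, ¬ G.Adj u v)
    (k : ℕ) (hk : C.card = k) (hk3 : 3 ≤ k) :
    (∃ f : V → Fin k, IsSCFVC G f) ∧ svcfc G = k := by
  subst hk
  have hmemI : ∀ v ∉ C, v ∈ I := fun v hv =>
    (Finset.mem_union.mp (huniv ▸ Finset.mem_univ v)).resolve_left hv
  have hC : G.IsClique (C : Set V) := fun u hu v hv huv => hclique u hu v hv huv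
  have hI : G.IsIndepSet (C : Set V)ᶜ := fun u hu v hv _ => hindep u (hmemI u hu) v (hmemI v hv)
  obtain ⟨a, ha, b, hb, c, hc, hab, hac, hbc⟩ := Finset.two_lt_card.mp hk3
  obtain ⟨r, hr_mem, hr⟩ := exists_isSCFVC_of_isClique_isIndepSet_compl hG hC hI
    (fun v hv => hmiss v (hmemI v hv)) ha hb hc hab hac hbc
  have hf := exists_fin_card_isSCFVC hr_mem hr
  exact ⟨hf, svcfc_eq_card_of_isClique hC hf⟩

/-- A connected split graph with a partition into a clique `C` of size `k ≥ 3` and a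
nonempty independent set `I` in which every vertex of `I` misses some vertex of `C`
admits a strong conflict-free vertex-connection `k`-coloring, and `svcfc(G) = k`. -/
theorem stmt15 {V : Type*} [Fintype V] [DecidableEq V] (G : SimpleGraph V)
    (hG : G.Connected) (C I : Finset V)
    (hdisj : Disjoint C I) (huniv : C ∪ I = Finset.univ)
    (hclique : ∀ u ∈ C, ∀ v ∈ C, u ≠ v → G.Adj u v)
    (hindep : ∀ u ∈ I, ∀ v ∈ I, ¬ G.Adj u v)
    (hIne : I.Nonempty)
    (hmiss : ∀ u ∈ I, ∃ v ∈ C, ¬ G.Adj u v)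
    (k : ℕ) (hk : C.card = k) (hk3 : 3 ≤ k) :
    (∃ f : V → Fin k, IsSCFVC G f) ∧ svcfc G = k :=
  stmt15_general G hG C I huniv hclique hindep hmiss k hk hk3
end

section
/- Let G be a connected split graph that is not a star, whose vertex set is partitioned into a clique C = {x, y} of size 2 and a nonempty independent set I such that every vertex of I is non-adjacent to at least one vertex of C. Then the 3-coloring assigning color 1 to x, color 2 to y, and color 3 to every vertex of I is a strong conflict-free vertex-connection 3-coloring of G, and svcfc(G) = 3. -/
/-!
Every vertex of `I` is a pendant vertex hanging at `x` or at `y`, and because `G` is not a star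
both kinds occur; pendant vertices `a` at `x` and `b` at `y` span an induced path `a x y b`, which
is the only shortest `a`–`b` path. A coloring with two colors must give `a` the color of `y` and
`b` the color of `x`, so the colors alternate along that path and none occurs exactly once.
Conversely `{x, y}` is a vertex cover whose two colors are used nowhere else, and every shortest
path between distinct vertices meets it.
-/

open SimpleGraph

theorem List.count_map_eq_one {α β : Type*} [DecidableEq α] [DecidableEq β] {f : α → β}
    {l : List α} {a : α} (hl : l.Nodup) (ha : a ∈ l) (hf : ∀ b ∈ l, f b = f a → b = a) :
    (l.map f).count (f a) = 1 := by
  rw [List.count_eq_countP, List.countP_map, ← List.count_eq_one_of_mem hl ha,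
    List.count_eq_countP]
  refine List.countP_congr fun b hb => ?_
  simp only [Function.comp_apply, beq_iff_eq]
  exact ⟨hf b hb, fun h => h ▸ rfl⟩

theorem List.count_alternating_ne_one {α : Type*} [DecidableEq α] (p q c : α) :
    [p, q, p, q].count c ≠ 1 := by
  simp only [List.count_cons, List.count_nil, beq_iff_eq]
  split_ifs <;> omega

namespace SimpleGraph

variable {V : Type*} {G : SimpleGraph V}

theorem adj_iff_eq_of_neighborSet_eq_singleton {a x w : V} (h : G.neighborSet a = {x}) :
    G.Adj a w ↔ w = x :=
  Set.ext_iff.mp h w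

theorem Walk.support_eq_of_length_eq_one {u v : V} (p : G.Walk u v) (h : p.length = 1) :
    p.support = [u, v] := by
  match p, h with
  | .cons _ .nil, _ => rfl

theorem Walk.support_eq_of_length_eq_three {a b x y : V} (ha : G.neighborSet a = {x})
    (hb : G.neighborSet b = {y}) (p : G.Walk a b) (h : p.length = 3) :
    p.support = [a, x, y, b] := by
  match p, h with
  | .cons h₁ (.cons _ (.cons h₃ .nil)), _ =>
    obtain rfl := (adj_iff_eq_of_neighborSet_eq_singleton ha).mp h₁
    obtain rfl := (adj_iff_eq_of_neighborSet_eq_singleton hb).mp h₃.symm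
    rfl

theorem dist_eq_three_of_neighborSet_eq_singleton {a b x y : V} (ha : G.neighborSet a = {x})
    (hb : G.neighborSet b = {y}) (hxy : G.Adj x y) (hab : ¬ G.Adj a b) : G.dist a b = 3 := by
  have hax : G.Adj a x := (adj_iff_eq_of_neighborSet_eq_singleton ha).mpr rfl
  have hyb : G.Adj y b := ((adj_iff_eq_of_neighborSet_eq_singleton hb).mpr rfl).symm
  let p : G.Walk a b := .cons hax (.cons hxy (.cons hyb .nil))
  have hreach : G.Reachable a b := p.reachable
  have hne : a ≠ b := fun h => hxy.ne (by simpa [h, hb, eq_comm] using ha)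
  have h2 : 2 < G.edist a b := by
    rw [two_lt_edist_iff, commonNeighbors_eq, ha, hb]
    exact ⟨hne, hab, Set.singleton_inter_eq_empty.mpr hxy.ne⟩
  rw [← hreach.coe_dist_eq_edist] at h2
  have h3 : G.dist a b ≤ 3 := dist_le p
  norm_cast at h2
  omega

def IsStarCenter (G : SimpleGraph V) (z : V) : Prop :=
  (∀ w : V, w ≠ z → G.Adj z w) ∧ ∀ w w' : V, w ≠ z → w' ≠ z → w ≠ w' → ¬ G.Adj w w'

structure IsEdgeSplitPartition (G : SimpleGraph V) (x y : V) (I : Set V) : Prop where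
  adj : G.Adj x y
  left_notMem : x ∉ I
  right_notMem : y ∉ I
  mem_or : ∀ v, v = x ∨ v = y ∨ v ∈ I
  indep : ∀ u ∈ I, ∀ v ∈ I, ¬ G.Adj u v

namespace IsEdgeSplitPartition

variable {x y : V} {I : Set V}

theorem symm (h : G.IsEdgeSplitPartition x y I) : G.IsEdgeSplitPartition y x I :=
  ⟨h.adj.symm, h.right_notMem, h.left_notMem, fun v => or_left_comm.mp (h.mem_or v), h.indep⟩

theorem mem_or_mem_of_adj (h : G.IsEdgeSplitPartition x y I) {u v : V} (huv : G.Adj u v) :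
    u ∈ ({x, y} : Set V) ∨ v ∈ ({x, y} : Set V) := by
  rcases h.mem_or u with rfl | rfl | hu
  · simp
  · simp
  rcases h.mem_or v with rfl | rfl | hv
  · simp
  · simp
  · exact absurd huv (h.indep u hu v hv)

theorem neighborSet_eq_singleton_or (h : G.IsEdgeSplitPartition x y I) (hG : G.Connected)
    (hmiss : ∀ u ∈ I, ¬ G.Adj u x ∨ ¬ G.Adj u y) {u : V} (hu : u ∈ I) :
    G.neighborSet u = {x} ∨ G.neighborSet u = {y} := by
  have hsub : G.neighborSet u ⊆ {x, y} := fun w hw => by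
    rcases h.mem_or w with rfl | rfl | hw'
    · simp
    · simp
    · exact absurd hw (h.indep u hu w hw')
  have hne : (G.neighborSet u).Nonempty :=
    (hG u x).nonempty_neighborSet_left fun hux => h.left_notMem (by rwa [← hux])
  rcases Set.subset_pair_iff_eq.mp hsub with h' | h' | h' | h'
  · simp [h'] at hne
  · exact Or.inl h'
  · exact Or.inr h'
  · rcases hmiss u hu with hx | hy
    · exact absurd (by simp [h'] : x ∈ G.neighborSet u) hx
    · exact absurd (by simp [h'] : y ∈ G.neighborSet u) hy

theorem exists_neighborSet_eq_singleton (h : G.IsEdgeSplitPartition x y I) (hG : G.Connected)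
    (hmiss : ∀ u ∈ I, ¬ G.Adj u x ∨ ¬ G.Adj u y) (hstar : ¬ G.IsStarCenter x) :
    ∃ b ∈ I, G.neighborSet b = {y} := by
  by_contra! hb
  have hx : ∀ u ∈ I, G.neighborSet u = {x} := fun u hu =>
    (h.neighborSet_eq_singleton_or hG hmiss hu).resolve_right (hb u hu)
  refine hstar ⟨fun w hw => ?_, fun w w' hw hw' hww' hadj => ?_⟩
  · rcases h.mem_or w with rfl | rfl | hwI
    · exact absurd rfl hw
    · exact h.adj
    · exact ((adj_iff_eq_of_neighborSet_eq_singleton (hx w hwI)).mpr rfl).symm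
  · rcases h.mem_or w with rfl | rfl | hwI
    · exact hw rfl
    · rcases h.mem_or w' with rfl | rfl | hw'I
      · exact hw' rfl
      · exact hww' rfl
      · exact hw ((adj_iff_eq_of_neighborSet_eq_singleton (hx w' hw'I)).mp hadj.symm)
    · exact hw' ((adj_iff_eq_of_neighborSet_eq_singleton (hx w hwI)).mp hadj)

end IsEdgeSplitPartition

end SimpleGraph

namespace IsSCFVC

variable {V α : Type*} [DecidableEq α] {G : SimpleGraph V} {f : V → α}

theorem ne_of_adj_s16 (hf : IsSCFVC G f) {u v : V} (h : G.Adj u v) : f u ≠ f v := by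
  obtain ⟨p, hp, c, hc⟩ := hf u v h.ne
  rw [dist_eq_one_iff_adj.mpr h] at hp
  rw [p.support_eq_of_length_eq_one hp] at hc
  intro huv
  simp only [List.map_cons, List.map_nil, huv, List.count_cons, List.count_nil] at hc
  split_ifs at hc <;> omega

/-- `a x y b` is the only shortest `a`–`b` path. -/
theorem ne_or_ne_of_neighborSet_eq_singleton (hf : IsSCFVC G f) {a b x y : V}
    (ha : G.neighborSet a = {x}) (hb : G.neighborSet b = {y}) (hxy : G.Adj x y)
    (hab : ¬ G.Adj a b) : f a ≠ f y ∨ f b ≠ f x := by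
  have hd := dist_eq_three_of_neighborSet_eq_singleton ha hb hxy hab
  obtain ⟨p, hp, c, hc⟩ := hf a b fun h => by simp [h] at hd
  rw [hd] at hp
  rw [p.support_eq_of_length_eq_three ha hb hp] at hc
  by_contra! h
  simp only [List.map_cons, List.map_nil, h.1, h.2] at hc
  exact List.count_alternating_ne_one _ _ _ hc

theorem three_le {k : ℕ} {f : V → Fin k} (hf : IsSCFVC G f) {a b x y : V}
    (ha : G.neighborSet a = {x}) (hb : G.neighborSet b = {y}) (hxy : G.Adj x y)
    (hab : ¬ G.Adj a b) : 3 ≤ k := by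
  by_contra! hk
  have two_colors : ∀ {u v w : Fin k}, u ≠ v → w ≠ u → w = v := by
    intro u v w
    have := u.isLt
    have := v.isLt
    have := w.isLt
    simp only [ne_eq, Fin.ext_iff]
    omega
  have hax : G.Adj a x := (adj_iff_eq_of_neighborSet_eq_singleton ha).mpr rfl
  have hby : G.Adj b y := (adj_iff_eq_of_neighborSet_eq_singleton hb).mpr rfl
  have hfxy := hf.ne_of_adj_s16 hxy
  rcases hf.ne_or_ne_of_neighborSet_eq_singleton ha hb hxy hab with h | h
  · exact h (two_colors hfxy (hf.ne_of_adj_s16 hax))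
  · exact h (two_colors hfxy.symm (hf.ne_of_adj_s16 hby))

end IsSCFVC

/-- A shortest path is a path, and its first edge meets `S`. -/
theorem isSCFVC_of_vertexCover {V α : Type*} [DecidableEq V] [DecidableEq α]
    {G : SimpleGraph V} (hG : G.Connected) (f : V → α) (S : Set V)
    (hcover : ∀ u v, G.Adj u v → u ∈ S ∨ v ∈ S) (hunique : ∀ s ∈ S, ∀ w, f w = f s → w = s) :
    IsSCFVC G f := by
  intro u v huv
  obtain ⟨p, hpath, hp⟩ := hG.exists_path_of_dist u v
  refine ⟨p, hp, ?_⟩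
  have hcolored : ∃ s ∈ S, s ∈ p.support := by
    cases p with
    | nil => exact absurd rfl huv
    | cons h q =>
      rcases hcover _ _ h with hs | hs
      · exact ⟨_, hs, by simp⟩
      · exact ⟨_, hs, by simp⟩
  obtain ⟨s, hs, hsp⟩ := hcolored
  exact ⟨f s, List.count_map_eq_one hpath.support_nodup hsp fun w _ => hunique s hs w⟩

theorem stmt16_general {V : Type*} [DecidableEq V] (G : SimpleGraph V)
    (hG : G.Connected) (x y : V) (hadj : G.Adj x y)
    (I : Finset V) (hxI : x ∉ I) (hyI : y ∉ I)
    (huniv : ∀ v : V, v = x ∨ v = y ∨ v ∈ I)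
    (hindep : ∀ u ∈ I, ∀ v ∈ I, ¬ G.Adj u v)
    (hmiss : ∀ u ∈ I, ¬ G.Adj u x ∨ ¬ G.Adj u y)
    (hnotstar : ¬ ∃ z : V, (∀ w : V, w ≠ z → G.Adj z w) ∧
      ∀ w w' : V, w ≠ z → w' ≠ z → w ≠ w' → ¬ G.Adj w w') :
    IsSCFVC G (fun v => if v = x then (0 : Fin 3) else if v = y then 1 else 2) ∧
    svcfc G = 3 := by
  have hsplit : G.IsEdgeSplitPartition x y I := ⟨hadj, hxI, hyI, huniv, hindep⟩
  obtain ⟨a, haI, ha⟩ := hsplit.symm.exists_neighborSet_eq_singleton hG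
    (fun u hu => (hmiss u hu).symm) fun h => hnotstar ⟨y, h⟩
  obtain ⟨b, hbI, hb⟩ := hsplit.exists_neighborSet_eq_singleton hG hmiss fun h => hnotstar ⟨x, h⟩
  have hf : IsSCFVC G (fun v => if v = x then (0 : Fin 3) else if v = y then 1 else 2) := by
    refine isSCFVC_of_vertexCover hG _ {x, y} (fun u v => hsplit.mem_or_mem_of_adj) ?_
    rintro s (rfl | rfl) w
    all_goals split_ifs <;> simp_all [hadj.ne, hadj.ne.symm]
  refine ⟨hf, le_antisymm (Nat.sInf_le ⟨_, hf⟩) (le_csInf ⟨3, _, hf⟩ ?_)⟩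
  rintro k ⟨g, hg⟩
  exact hg.three_le ha hb hadj (hindep a haI b hbI)

/-- Let `G` be a connected split graph that is not a star, partitioned into the clique
`{x, y}` and a nonempty independent set `I` whose every vertex misses `x` or `y`. Then
coloring `x` with `1`, `y` with `2` and all of `I` with `3` (here `0, 1, 2 : Fin 3`) is a
strong conflict-free vertex-connection `3`-coloring of `G`, and `svcfc(G) = 3`. -/
theorem stmt16 {V : Type*} [Fintype V] [DecidableEq V] (G : SimpleGraph V)
    (hG : G.Connected) (x y : V) (hxy : x ≠ y) (hadj : G.Adj x y)
    (I : Finset V) (hxI : x ∉ I) (hyI : y ∉ I)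
    (huniv : ∀ v : V, v = x ∨ v = y ∨ v ∈ I)
    (hindep : ∀ u ∈ I, ∀ v ∈ I, ¬ G.Adj u v)
    (hIne : I.Nonempty)
    (hmiss : ∀ u ∈ I, ¬ G.Adj u x ∨ ¬ G.Adj u y)
    (hnotstar : ¬ ∃ z : V, (∀ w : V, w ≠ z → G.Adj z w) ∧
      ∀ w w' : V, w ≠ z → w' ≠ z → w ≠ w' → ¬ G.Adj w w') :
    IsSCFVC G (fun v => if v = x then (0 : Fin 3) else if v = y then 1 else 2) ∧
    svcfc G = 3 :=
  stmt16_general G hG x y hadj I hxI hyI huniv hindep hmiss hnotstar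
end

section
/- Let G be a connected simple graph whose vertex set is partitioned into two nonempty cliques A and B, such that at least two edges of G have one endpoint in A and the other in B. Then every proper vertex coloring of G is a strong conflict-free vertex-connection coloring of G; in particular svcfc(G) = χ(G). -/
open SimpleGraph

/-!
A proper coloring gives every path on at most three vertices a color occurring once on it
(an end, or the middle vertex), so only pairs `u ∈ A`, `v ∈ B` at distance at least 3 matter.
Then every edge `ab` from `A` to `B` yields a shortest path `u a b v`, which fails only if its
colors read `i, j, i, j`. The paths through two distinct such edges `xy`, `x'y'` cannot both
fail: that would force `f x = f x'` and `f y = f y'`, although `x ≠ x'` or `y ≠ y'` and each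
clique is properly colored.
-/

namespace SimpleGraph

variable {V α : Type*} [DecidableEq α] {G : SimpleGraph V} {f : V → α} {u v : V}

def HasConflictFreeGeodesic (G : SimpleGraph V) (f : V → α) (u v : V) : Prop :=
  ∃ p : G.Walk u v, p.length = G.dist u v ∧ ∃ c : α, (p.support.map f).count c = 1

lemma Walk.exists_count_map_support_eq_one_of_length_le_two
    (hf : ∀ u v, G.Adj u v → f u ≠ f v) (p : G.Walk u v) (hp : p.length ≤ 2) :
    ∃ c, (p.support.map f).count c = 1 :=
  match p, hp with
  | .nil, _ => ⟨f u, by simp⟩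
  | .cons h .nil, _ => ⟨f u, by simp [(hf _ _ h).symm]⟩
  | .cons (v := w) h (.cons h' .nil), _ => ⟨f w, by simp [hf _ _ h, (hf _ _ h').symm]⟩
  | .cons _ (.cons _ (.cons _ _)), hp => by simp at hp

lemma Walk.exists_count_map_support_eq_one_of_length_three
    (hf : ∀ u v, G.Adj u v → f u ≠ f v) {a b : V} (ha : G.Adj u a) (hab : G.Adj a b)
    (hb : G.Adj b v) (hgood : ¬(f u = f b ∧ f a = f v)) :
    ∃ c, ((Walk.cons ha (.cons hab (.cons hb .nil))).support.map f).count c = 1 := by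
  have hua := hf _ _ ha
  have hab' := hf _ _ hab
  by_cases hu : f u = f b ∨ f u = f v
  · have hav : f a ≠ f v := by
      rcases hu with h | h
      · exact fun hav => hgood ⟨h, hav⟩
      · exact h ▸ hua.symm
    exact ⟨f a, by simp [hua, hab'.symm, hav.symm]⟩
  · push Not at hu
    exact ⟨f u, by simp [hua.symm, hu.1.symm, hu.2.symm]⟩

lemma hasConflictFreeGeodesic_of_dist_le_two (hG : G.Connected)
    (hf : ∀ u v, G.Adj u v → f u ≠ f v) (h : G.dist u v ≤ 2) :
    HasConflictFreeGeodesic G f u v := by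
  obtain ⟨p, hp⟩ := hG.exists_walk_length_eq_dist u v
  exact ⟨p, hp, p.exists_count_map_support_eq_one_of_length_le_two hf (hp ▸ h)⟩

lemma hasConflictFreeGeodesic_of_dist_eq_three
    (hf : ∀ u v, G.Adj u v → f u ≠ f v) {a b : V} (ha : G.Adj u a) (hab : G.Adj a b)
    (hb : G.Adj b v) (hd : G.dist u v = 3) (hgood : ¬(f u = f b ∧ f a = f v)) :
    HasConflictFreeGeodesic G f u v :=
  ⟨_, by simp [hd], Walk.exists_count_map_support_eq_one_of_length_three hf ha hab hb hgood⟩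

lemma IsClique.dist_le_one {s : Set V} (hs : G.IsClique s) (hu : u ∈ s) (hv : v ∈ s) :
    G.dist u v ≤ 1 := by
  rcases eq_or_ne u v with rfl | huv
  · simp
  · exact (dist_eq_one_iff_adj.mpr (hs hu hv huv)).le

lemma dist_le_two_of_adj_of_mem_clique (hG : G.Connected) {s : Set V} (hs : G.IsClique s)
    {w : V} (huw : G.Adj u w) (hw : w ∈ s) (hv : v ∈ s) : G.dist u v ≤ 2 :=
  calc G.dist u v ≤ G.dist u w + G.dist w v := hG.dist_triangle
    _ ≤ 1 + 1 := add_le_add (dist_eq_one_iff_adj.mpr huw).le (hs.dist_le_one hw hv)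

lemma adj_of_two_lt_dist (hG : G.Connected) {A B : Set V} (hA : G.IsClique A)
    (hB : G.IsClique B) (hu : u ∈ A) (hv : v ∈ B) (hd : 2 < G.dist u v) {a b : V}
    (ha : a ∈ A) (hb : b ∈ B) (hab : G.Adj a b) : G.Adj u a ∧ G.Adj b v := by
  refine ⟨hA hu ha ?_, hB hb hv ?_⟩
  · rintro rfl
    exact hd.not_ge (dist_le_two_of_adj_of_mem_clique hG hB hab hb hv)
  · rintro rfl
    rw [dist_comm] at hd
    exact hd.not_ge (dist_le_two_of_adj_of_mem_clique hG hA hab.symm ha hu)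

lemma hasConflictFreeGeodesic_of_mem_of_mem (hG : G.Connected)
    (hf : ∀ u v, G.Adj u v → f u ≠ f v) {A B : Set V} (hA : G.IsClique A)
    (hB : G.IsClique B) {x y x' y' : V} (hx : x ∈ A) (hy : y ∈ B) (hx' : x' ∈ A)
    (hy' : y' ∈ B) (hxy : G.Adj x y) (hxy' : G.Adj x' y') (hne : x ≠ x' ∨ y ≠ y')
    (hu : u ∈ A) (hv : v ∈ B) : HasConflictFreeGeodesic G f u v := by
  by_cases h2 : G.dist u v ≤ 2
  · exact hasConflictFreeGeodesic_of_dist_le_two hG hf h2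
  push Not at h2
  obtain ⟨hux, hyv⟩ := adj_of_two_lt_dist hG hA hB hu hv h2 hx hy hxy
  obtain ⟨hux', hy'v⟩ := adj_of_two_lt_dist hG hA hB hu hv h2 hx' hy' hxy'
  have hd : G.dist u v = 3 :=
    le_antisymm (by simpa using dist_le (.cons hux (.cons hxy (.cons hyv .nil)))) h2
  by_cases hbad : f u = f y ∧ f x = f v
  · refine hasConflictFreeGeodesic_of_dist_eq_three hf hux' hxy' hy'v hd ?_
    rintro ⟨hy'c, hx'c⟩
    rcases hne with hxx | hyy
    · exact hf _ _ (hA hx hx' hxx) (hbad.2.trans hx'c.symm)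
    · exact hf _ _ (hB hy hy' hyy) (hbad.1.symm.trans hy'c)
  · exact hasConflictFreeGeodesic_of_dist_eq_three hf hux hxy hyv hd hbad

lemma IsSCFVC.ne_of_adj (hf : IsSCFVC G f) (h : G.Adj u v) : f u ≠ f v := by
  obtain ⟨p, hp, c, hc⟩ := hf u v h.ne
  rw [dist_eq_one_iff_adj.mpr h] at hp
  match p, hp with
  | .cons _ .nil, _ =>
    intro huv
    by_cases hcu : f u = c <;> simp_all [List.count_cons]
  | .cons _ (.cons _ _), hp => simp at hp

lemma svcfc_eq_chromaticNumber_of_forall_isSCFVC [Fintype V]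
    (h : ∀ k (f : V → Fin k), (∀ u v, G.Adj u v → f u ≠ f v) → IsSCFVC G f) :
    (svcfc G : ℕ∞) = G.chromaticNumber := by
  have hset : {k | ∃ f : V → Fin k, IsSCFVC G f} = {k | G.Colorable k} := by
    ext k
    constructor
    · rintro ⟨f, hf⟩
      exact ⟨⟨f, fun h => hf.ne_of_adj h⟩⟩
    · rintro ⟨C⟩
      exact ⟨C, h k C fun _ _ => C.valid⟩
  rw [G.colorable_of_fintype.chromaticNumber_eq_sInf, svcfc, hset]

end SimpleGraph

theorem stmt19_general {V : Type*} [Fintype V] [DecidableEq V] (G : SimpleGraph V)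
    (hG : G.Connected) (A B : Finset V)
    (huniv : A ∪ B = Finset.univ)
    (hA : ∀ u ∈ A, ∀ v ∈ A, u ≠ v → G.Adj u v)
    (hB : ∀ u ∈ B, ∀ v ∈ B, u ≠ v → G.Adj u v)
    (x y x' y' : V) (hx : x ∈ A) (hy : y ∈ B) (hx' : x' ∈ A) (hy' : y' ∈ B)
    (hxy : G.Adj x y) (hxy' : G.Adj x' y') (hne : (x, y) ≠ (x', y')) :
    (∀ (α : Type) [DecidableEq α] (f : V → α),
        (∀ u v : V, G.Adj u v → f u ≠ f v) → IsSCFVC G f) ∧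
    (svcfc G : ℕ∞) = G.chromaticNumber := by
  have hA : G.IsClique (A : Set V) := fun u hu v hv => hA u hu v hv
  have hB : G.IsClique (B : Set V) := fun u hu v hv => hB u hu v hv
  have hne : x ≠ x' ∨ y ≠ y' := not_and_or.mp fun h => hne (Prod.ext h.1 h.2)
  have hcover (w : V) : w ∈ A ∨ w ∈ B := Finset.mem_union.mp (huniv ▸ Finset.mem_univ w)
  have hproper (α : Type) [DecidableEq α] (f : V → α)
      (hf : ∀ u v : V, G.Adj u v → f u ≠ f v) : IsSCFVC G f := by
    intro u v _
    rcases hcover u with hu | hu <;> rcases hcover v with hv | hv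
    · exact hasConflictFreeGeodesic_of_dist_le_two hG hf ((hA.dist_le_one hu hv).trans one_le_two)
    · exact hasConflictFreeGeodesic_of_mem_of_mem hG hf hA hB hx hy hx' hy' hxy hxy' hne hu hv
    · exact hasConflictFreeGeodesic_of_mem_of_mem hG hf hB hA hy hx hy' hx' hxy.symm hxy'.symm
        hne.symm hu hv
    · exact hasConflictFreeGeodesic_of_dist_le_two hG hf ((hB.dist_le_one hu hv).trans one_le_two)
  exact ⟨hproper, svcfc_eq_chromaticNumber_of_forall_isSCFVC fun k => hproper (Fin k)⟩

/-- Let `G` be connected, partitioned into two nonempty cliques `A`, `B` with at least two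
edges between `A` and `B`. Then every proper coloring of `G` is a strong conflict-free
vertex-connection coloring; in particular `svcfc(G) = χ(G)`. -/
theorem stmt19 {V : Type*} [Fintype V] [DecidableEq V] (G : SimpleGraph V)
    (hG : G.Connected) (A B : Finset V)
    (hdisj : Disjoint A B) (huniv : A ∪ B = Finset.univ)
    (hA : ∀ u ∈ A, ∀ v ∈ A, u ≠ v → G.Adj u v)
    (hB : ∀ u ∈ B, ∀ v ∈ B, u ≠ v → G.Adj u v)
    (hAne : A.Nonempty) (hBne : B.Nonempty)
    (x y x' y' : V) (hx : x ∈ A) (hy : y ∈ B) (hx' : x' ∈ A) (hy' : y' ∈ B)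
    (hxy : G.Adj x y) (hxy' : G.Adj x' y') (hne : (x, y) ≠ (x', y')) :
    (∀ (α : Type) [DecidableEq α] (f : V → α),
        (∀ u v : V, G.Adj u v → f u ≠ f v) → IsSCFVC G f) ∧
    (svcfc G : ℕ∞) = G.chromaticNumber :=
  stmt19_general G hG A B huniv hA hB x y x' y' hx hy hx' hy' hxy hxy' hne
end
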